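/- Pawula's termination theorem (sequence form). Let D : ℕ → ℝ be a sequence satisfying the moment Cauchy–Schwarz inequalities (D (n + m))^2 ≤ D (2*n) * D (2*m) for all n, m : ℕ. If there exists a natural number N > 2 such that D k = 0 for every k > N, then necessarily D N = 0. Consequently, such a sequence cannot terminate at any finite order N > 2 with a nonzero last term: either it terminates after the second term or it never terminates. -/
import Mathlib

/-- **Pawula's termination theorem (sequence form).**
If `D : ℕ → ℝ` satisfies the moment Cauchy–Schwarz inequalities
`(D (n + m)) ^ 2 ≤ D (2*n) * D (2*m)` for all `n m : ℕ`, and there is `N > 2` such that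
`D k = 0` for every `k > N`, then `D N = 0`; hence the sequence cannot terminate at
any finite order `N > 2` with a nonzero last term. -/
theorem pawula_termination (D : ℕ → ℝ)
    (hCS : ∀ n m : ℕ, (D (n + m)) ^ 2 ≤ D (2 * n) * D (2 * m))
    (N : ℕ) (hN : 2 < N) (hterm : ∀ k : ℕ, N < k → D k = 0) :
    D N = 0 := by
  have h := hCS N 0
  rw [Nat.add_zero, hterm (2 * N) (by omega), zero_mul] at h
  nlinarith [sq_nonneg (D N)]
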